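/- Let u, B : ℝ³ → ℝ³ be twice continuously differentiable and α, β, λ : ℝ³ → ℝ continuously differentiable. Suppose div u = 0, div B = 0, curl u = λ u, B + curl u = α u, and u − curl B = −β B pointwise on ℝ³. Then ∇α(x) = ∇β(x) at every point x with u(x) ≠ 0; in other words, ∇(α − β) vanishes on the support of u. -/

import Mathlib

noncomputable section

open Real MeasureTheory

/-- ℝ³ as coordinate functions. -/
abbrev V3 : Type := Fin 3 → ℝ

/-- Partial derivative in the `i`-th coordinate direction. -/
noncomputable def pd (i : Fin 3) (f : V3 → ℝ) (x : V3) : ℝ :=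
  fderiv ℝ f x (Pi.single i 1)

/-- Curl of a vector field on ℝ³:
`curl v = (∂₂v₃ − ∂₃v₂, ∂₃v₁ − ∂₁v₃, ∂₁v₂ − ∂₂v₁)`. -/
noncomputable def curl (v : V3 → V3) (x : V3) : V3 :=
  ![pd 1 (fun y => v y 2) x - pd 2 (fun y => v y 1) x,
    pd 2 (fun y => v y 0) x - pd 0 (fun y => v y 2) x,
    pd 0 (fun y => v y 1) x - pd 1 (fun y => v y 0) x]

/-- Divergence of a vector field on ℝ³. -/
noncomputable def div3 (v : V3 → V3) (x : V3) : ℝ :=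
  pd 0 (fun y => v y 0) x + pd 1 (fun y => v y 1) x + pd 2 (fun y => v y 2) x

/-- Gradient of a scalar function on ℝ³. -/
noncomputable def grad (f : V3 → ℝ) (x : V3) : V3 :=
  ![pd 0 f x, pd 1 f x, pd 2 f x]

/-- Cross product on ℝ³. -/
def cross (a b : V3) : V3 :=
  ![a 1 * b 2 - a 2 * b 1, a 2 * b 0 - a 0 * b 2, a 0 * b 1 - a 1 * b 0]

/-- Componentwise Laplacian of a vector field. -/
noncomputable def lap (v : V3 → V3) (x : V3) : V3 :=
  fun j => ∑ i : Fin 3, pd i (fun y => pd i (fun z => v z j) y) x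

/-- Advection term `((u·∇)w)_j = Σ_i u_i ∂_i w_j`. -/
noncomputable def adv (u w : V3 → V3) (x : V3) : V3 :=
  fun j => ∑ i : Fin 3, u x i * pd i (fun y => w y j) x

/-- Time derivative of a time-dependent vector field. -/
noncomputable def dt (u : ℝ → V3 → V3) (t : ℝ) (x : V3) : V3 :=
  fun j => deriv (fun s => u s x j) t

lemma pd_mul' {f h : V3 → ℝ} {x : V3} (hf : DifferentiableAt ℝ f x)
    (hh : DifferentiableAt ℝ h x) (i : Fin 3) :
    pd i (fun y => f y * h y) x = pd i f x * h x + f x * pd i h x := by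
  unfold pd
  rw [fderiv_fun_mul hf hh]
  simp; ring

lemma pd_sub' {f h : V3 → ℝ} {x : V3} (hf : DifferentiableAt ℝ f x)
    (hh : DifferentiableAt ℝ h x) (i : Fin 3) :
    pd i (fun y => f y - h y) x = pd i f x - pd i h x := by
  unfold pd
  rw [fderiv_fun_sub hf hh]; simp

/-- for a Beltrami flow in a double Beltrami state, `∇(α−β)` vanishes on
the support of `u`. -/
theorem grad_alpha_eq_grad_beta_on_support
    (u B : V3 → V3) (α β lam : V3 → ℝ)
    (hu : ContDiff ℝ 2 u) (hB : ContDiff ℝ 2 B)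
    (hα : ContDiff ℝ 1 α) (hβ : ContDiff ℝ 1 β) (hlam : ContDiff ℝ 1 lam)
    (hdivu : ∀ x, div3 u x = 0) (hdivB : ∀ x, div3 B x = 0)
    (hbel : ∀ x, curl u x = lam x • u x)
    (h1 : ∀ x, B x + curl u x = α x • u x)
    (h2 : ∀ x, u x - curl B x = -(β x) • B x) :
    ∀ x, u x ≠ 0 → grad α x = grad β x := by
  set g : V3 → ℝ := fun x => α x - lam x with hgdef
  have du : ∀ j : Fin 3, Differentiable ℝ (fun y => u y j) := fun j =>
    ((ContinuousLinearMap.proj j : V3 →L[ℝ] ℝ).differentiable).comp (hu.differentiable two_ne_zero)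
  have dα : Differentiable ℝ α := hα.differentiable one_ne_zero
  have dβ : Differentiable ℝ β := hβ.differentiable one_ne_zero
  have dlam : Differentiable ℝ lam := hlam.differentiable one_ne_zero
  have dg : Differentiable ℝ g := dα.sub dlam
  -- B = g • u componentwise
  have hBg : ∀ x (j : Fin 3), B x j = g x * u x j := by
    intro x j
    have e1 := congrFun (h1 x) j
    have e2 := congrFun (hbel x) j
    simp only [Pi.add_apply, Pi.smul_apply, smul_eq_mul] at e1 e2
    rw [e2] at e1
    simp only [hgdef]
    linear_combination e1
  have hBfun : ∀ j : Fin 3, (fun y => B y j) = (fun y => g y * u y j) := by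
    intro j; funext y; exact hBg y j
  -- curl u componentwise
  have hcu : ∀ x (j : Fin 3), curl u x j = lam x * u x j := by
    intro x j
    have := congrFun (hbel x) j
    simpa using this
  -- ∇g · u = 0
  have hdot : ∀ x, pd 0 g x * u x 0 + pd 1 g x * u x 1 + pd 2 g x * u x 2 = 0 := by
    intro x
    have hb := hdivB x
    have hd := hdivu x
    unfold div3 at hb hd
    rw [hBfun 0, hBfun 1, hBfun 2] at hb
    rw [pd_mul' (dg x) (du 0 x) 0, pd_mul' (dg x) (du 1 x) 1, pd_mul' (dg x) (du 2 x) 2] at hb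
    linear_combination hb - g x * hd
  -- the three components of  ∇g × u = (1 - gλ + βg) u
  have hX0 : ∀ x, pd 1 g x * u x 2 - pd 2 g x * u x 1
      = (1 - g x * lam x + β x * g x) * u x 0 := by
    intro x
    have e := congrFun (h2 x) 0
    have hc := hcu x 0
    simp only [Pi.sub_apply, Pi.smul_apply, smul_eq_mul, curl, Matrix.cons_val_zero,
      Matrix.cons_val_one, Matrix.head_cons, Matrix.cons_val_two, Matrix.tail_cons] at e hc
    rw [hBg x 0, hBfun 2, hBfun 1] at e
    rw [pd_mul' (dg x) (du 2 x) 1, pd_mul' (dg x) (du 1 x) 2] at e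
    linear_combination -e - g x * hc
  have hX1 : ∀ x, pd 2 g x * u x 0 - pd 0 g x * u x 2
      = (1 - g x * lam x + β x * g x) * u x 1 := by
    intro x
    have e := congrFun (h2 x) 1
    have hc := hcu x 1
    simp only [Pi.sub_apply, Pi.smul_apply, smul_eq_mul, curl, Matrix.cons_val_zero,
      Matrix.cons_val_one, Matrix.head_cons, Matrix.cons_val_two, Matrix.tail_cons] at e hc
    rw [hBg x 1, hBfun 0, hBfun 2] at e
    rw [pd_mul' (dg x) (du 0 x) 2, pd_mul' (dg x) (du 2 x) 0] at e
    linear_combination -e - g x * hc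
  have hX2 : ∀ x, pd 0 g x * u x 1 - pd 1 g x * u x 0
      = (1 - g x * lam x + β x * g x) * u x 2 := by
    intro x
    have e := congrFun (h2 x) 2
    have hc := hcu x 2
    simp only [Pi.sub_apply, Pi.smul_apply, smul_eq_mul, curl, Matrix.cons_val_zero,
      Matrix.cons_val_one, Matrix.head_cons, Matrix.cons_val_two, Matrix.tail_cons] at e hc
    rw [hBg x 2, hBfun 1, hBfun 0] at e
    rw [pd_mul' (dg x) (du 1 x) 0, pd_mul' (dg x) (du 0 x) 1] at e
    linear_combination -e - g x * hc
  -- |u|² ≠ 0 on the support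
  have hQ : ∀ x, u x ≠ 0 → u x 0 * u x 0 + u x 1 * u x 1 + u x 2 * u x 2 ≠ 0 := by
    intro x hx heq
    apply hx
    have s0 : u x 0 * u x 0 = 0 := by nlinarith [mul_self_nonneg (u x 0), mul_self_nonneg (u x 1), mul_self_nonneg (u x 2)]
    have s1 : u x 1 * u x 1 = 0 := by nlinarith [mul_self_nonneg (u x 0), mul_self_nonneg (u x 1), mul_self_nonneg (u x 2)]
    have s2 : u x 2 * u x 2 = 0 := by nlinarith [mul_self_nonneg (u x 0), mul_self_nonneg (u x 1), mul_self_nonneg (u x 2)]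
    have z0 : u x 0 = 0 := by nlinarith [s0]
    have z1 : u x 1 = 0 := by nlinarith [s1]
    have z2 : u x 2 = 0 := by nlinarith [s2]
    funext j
    fin_cases j
    · exact z0
    · exact z1
    · exact z2
  -- g (λ − β) = 1 on the support
  have hS : ∀ x, u x ≠ 0 → g x * (lam x - β x) = 1 := by
    intro x hx
    have e0 := hX0 x; have e1 := hX1 x; have e2 := hX2 x
    have key : (1 - g x * lam x + β x * g x) *
        (u x 0 * u x 0 + u x 1 * u x 1 + u x 2 * u x 2) = 0 := by
      linear_combination -(u x 0 * e0) - u x 1 * e1 - u x 2 * e2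
    have hc : 1 - g x * lam x + β x * g x = 0 :=
      (mul_eq_zero.mp key).resolve_right (hQ x hx)
    linarith [hc]
  intro x₀ hx₀
  have hc0 : 1 - g x₀ * lam x₀ + β x₀ * g x₀ = 0 := by
    have := hS x₀ hx₀; linarith [this]
  -- ∇g x₀ = 0
  have e0 := hX0 x₀; have e1 := hX1 x₀; have e2 := hX2 x₀
  rw [hc0, zero_mul] at e0 e1 e2
  have hd := hdot x₀
  have hQ0 := hQ x₀ hx₀
  have k0 : pd 0 g x₀ * (u x₀ 0 * u x₀ 0 + u x₀ 1 * u x₀ 1 + u x₀ 2 * u x₀ 2) = 0 := by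
    linear_combination u x₀ 0 * hd + u x₀ 1 * e2 - u x₀ 2 * e1
  have k1 : pd 1 g x₀ * (u x₀ 0 * u x₀ 0 + u x₀ 1 * u x₀ 1 + u x₀ 2 * u x₀ 2) = 0 := by
    linear_combination u x₀ 1 * hd - u x₀ 0 * e2 + u x₀ 2 * e0
  have k2 : pd 2 g x₀ * (u x₀ 0 * u x₀ 0 + u x₀ 1 * u x₀ 1 + u x₀ 2 * u x₀ 2) = 0 := by
    linear_combination u x₀ 2 * hd + u x₀ 0 * e1 - u x₀ 1 * e0
  have hgrad0 : ∀ i : Fin 3, pd i g x₀ = 0 := by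
    intro i
    fin_cases i
    · exact (mul_eq_zero.mp k0).resolve_right hQ0
    · exact (mul_eq_zero.mp k1).resolve_right hQ0
    · exact (mul_eq_zero.mp k2).resolve_right hQ0
  have hgne : g x₀ ≠ 0 := by
    intro h
    have := hS x₀ hx₀
    rw [h] at this; simp at this
  have hopen : IsOpen {x : V3 | u x ≠ 0} := by
    have hset : {x : V3 | u x ≠ 0} = (u ⁻¹' {0})ᶜ := by ext x; simp
    rw [hset]
    exact (isClosed_singleton.preimage (hu.continuous)).isOpen_compl
  have hev : (fun x => g x * (lam x - β x)) =ᶠ[nhds x₀] (fun _ => (1:ℝ)) :=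
    Filter.eventuallyEq_of_mem (hopen.mem_nhds hx₀) (fun x hx => hS x hx)
  have hfd : fderiv ℝ (fun x => g x * (lam x - β x)) x₀ = 0 := by
    rw [hev.fderiv_eq]; exact fderiv_const_apply 1
  have hpd0 : ∀ i : Fin 3, pd i (fun x => g x * (lam x - β x)) x₀ = 0 := by
    intro i; unfold pd; rw [hfd]; rfl
  have hlb : ∀ i : Fin 3, pd i (fun x => lam x - β x) x₀ = 0 := by
    intro i
    have h := hpd0 i
    rw [pd_mul' (h := fun x => lam x - β x) (dg x₀) ((dlam.sub dβ) x₀) i, hgrad0 i] at h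
    simp only [zero_mul, zero_add] at h
    exact (mul_eq_zero.mp h).resolve_left hgne
  have hal : ∀ i : Fin 3, pd i α x₀ = pd i lam x₀ := by
    intro i
    have h := hgrad0 i
    rw [hgdef] at h
    rw [pd_sub' (dα x₀) (dlam x₀) i] at h
    linarith [h]
  have hlbeta : ∀ i : Fin 3, pd i lam x₀ = pd i β x₀ := by
    intro i
    have h := hlb i
    rw [pd_sub' (dlam x₀) (dβ x₀) i] at h
    linarith [h]
  funext i
  fin_cases i
  · show pd 0 α x₀ = pd 0 β x₀
    rw [hal, hlbeta]
  · show pd 1 α x₀ = pd 1 β x₀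
    rw [hal, hlbeta]
  · show pd 2 α x₀ = pd 2 β x₀
    rw [hal, hlbeta]
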